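/- Let E be a measurable space, 𝒞 = {1,...,C} a finite label set, and (X_0, C_0), (X_1, C_1), ..., (X_n, C_n) i.i.d. random pairs in E × 𝒞. Let s^1, ..., s^K : E × 𝒞 → ℝ be measurable score functions (one per model in the ensemble). For each model k and label c define the per-model conformal p-value p_c^k(X_0) = (1 + #{i ∈ {1,...,n} : s^k(X_0, c) ≤ s^k(X_i, C_i)}) / (n + 1), define the merged p-value p_c(X_0) = K · min_{k=1,...,K} p_c^k(X_0), and for α ∈ (0,1) set Γ(X_0) = {c ∈ 𝒞 : p_c(X_0) > α}. Then Pr(C_0 ∈ Γ(X_0)) ≥ 1 − α. -/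

import Mathlib

/-!
Under i.i.d. sampling the vector of the `n + 1` scores is exchangeable, so every position is
equally likely to have fewer than `m` other scores at least as large as its own; since at most `m`
positions can, each per-model conformal p-value satisfies `P(p ≤ t) ≤ t`. The merged p-value
`K · min_k p^k` is at most `α` only if some `p^k ≤ α / K`, and a union bound over the `K` models
gives miscoverage at most `α`, whatever the dependence between the models.
-/

open MeasureTheory ProbabilityTheory Finset
open scoped ENNReal

section Rank

variable {ι γ : Type*} [Fintype ι] [DecidableEq ι] [LinearOrder γ]

def rankCount (x : ι → γ) (i : ι) : ℕ := #{j | j ≠ i ∧ x i ≤ x j}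

/-- The coordinate with the smallest value among those of rank count below `m` is dominated by all
the others. -/
lemma card_filter_rankCount_lt_le (x : ι → γ) (m : ℕ) : #{i | rankCount x i < m} ≤ m := by
  by_contra! hm
  set S : Finset ι := {i | rankCount x i < m}
  obtain ⟨i₀, hi₀, hmin⟩ := S.exists_min_image x (card_pos.mp (by omega))
  have hsub : S.erase i₀ ⊆ ({j | j ≠ i₀ ∧ x i₀ ≤ x j} : Finset ι) := fun j hj => by
    rw [mem_erase] at hj
    exact mem_filter.mpr ⟨mem_univ _, hj.1, hmin j hj.2⟩
  have hlt : rankCount x i₀ < m := (mem_filter.mp hi₀).2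
  have := card_le_card hsub
  rw [card_erase_of_mem hi₀] at this
  unfold rankCount at hlt
  omega

lemma rankCount_comp_perm (x : ι → γ) (σ : Equiv.Perm ι) (i : ι) :
    rankCount (x ∘ σ) i = rankCount x (σ i) :=
  card_equiv σ fun j => by simp

/-- With `ι = Fin (n + 1)`, `i = 0` and `x` the scores `s^k` of the test point (with candidate
label `c`) and of the calibration points, this is the paper's `p_c^k(X_0)`. -/
noncomputable def conformalPValue (x : ι → γ) (i : ι) : ℝ :=
  (1 + rankCount x i) / Fintype.card ι

end Rank

section Exchangeable

variable {ι β : Type*} [Fintype ι] [DecidableEq ι] [MeasurableSpace β]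

lemma measurable_rankCount_comp {g : β → ℝ} (hg : Measurable g) (i : ι) :
    Measurable fun f : ι → β => rankCount (g ∘ f) i := by
  simp only [rankCount, card_filter]
  refine Finset.measurable_sum _ fun j _ => Measurable.ite ?_ measurable_const measurable_const
  exact (MeasurableSet.const _).inter <|
    measurableSet_le (hg.comp (measurable_pi_apply i)) (hg.comp (measurable_pi_apply j))

lemma measure_pi_rankCount_lt_eq (ν : Measure β) [SigmaFinite ν] (g : β → ℝ) (m : ℕ)
    (i j : ι) :
    Measure.pi (fun _ : ι => ν) {f | rankCount (g ∘ f) i < m} =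
      Measure.pi (fun _ : ι => ν) {f | rankCount (g ∘ f) j < m} := by
  set σ := Equiv.swap i j
  have hσ : MeasurePreserving (MeasurableEquiv.arrowCongr' σ (MeasurableEquiv.refl β))
      (Measure.pi fun _ : ι => ν) (Measure.pi fun _ : ι => ν) :=
    measurePreserving_arrowCongr' _ _ σ _ fun _ => MeasurePreserving.id ν
  rw [← hσ.measure_preimage_equiv]
  congr 1
  ext f
  change rankCount (g ∘ f ∘ σ.symm) i < m ↔ _
  rw [← Function.comp_assoc, rankCount_comp_perm, Equiv.symm_swap, Equiv.swap_apply_left]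
  rfl

lemma card_mul_measure_pi_rankCount_lt_le (ν : Measure β) [IsProbabilityMeasure ν] {g : β → ℝ}
    (hg : Measurable g) (m : ℕ) (i : ι) :
    Fintype.card ι * Measure.pi (fun _ : ι => ν) {f | rankCount (g ∘ f) i < m} ≤ m := by
  set P := Measure.pi fun _ : ι => ν
  set A : ι → Set (ι → β) := fun j => {f | rankCount (g ∘ f) j < m}
  have hA : ∀ j, MeasurableSet (A j) := fun j =>
    measurable_rankCount_comp hg j (measurableSet_lt measurable_id measurable_const)
  have hcount : ∀ f, ∑ j, (A j).indicator 1 f ≤ (m : ℝ≥0∞) := fun f => by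
    simp only [A, Set.indicator_apply, Set.mem_ofPred_eq, Pi.one_apply, sum_boole]
    exact_mod_cast card_filter_rankCount_lt_le (g ∘ f) m
  calc Fintype.card ι * P (A i) = ∑ j, P (A j) := by
        rw [sum_congr rfl fun j _ => measure_pi_rankCount_lt_eq ν g m j i, sum_const, card_univ,
          nsmul_eq_mul]
    _ = ∫⁻ f, ∑ j, (A j).indicator 1 f ∂P := by
        rw [lintegral_finsetSum _ fun j _ => measurable_one.indicator (hA j)]
        simp [lintegral_indicator_one (hA _)]
    _ ≤ ∫⁻ _, (m : ℝ≥0∞) ∂P := lintegral_mono hcount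
    _ = m := by simp [P]

lemma measure_pi_conformalPValue_le (ν : Measure β) [IsProbabilityMeasure ν] {g : β → ℝ}
    (hg : Measurable g) (i : ι) (t : ℝ) :
    Measure.pi (fun _ : ι => ν) {f | conformalPValue (g ∘ f) i ≤ t} ≤ ENNReal.ofReal t := by
  set N := Fintype.card ι
  have hN : (0 : ℝ) < N := by exact_mod_cast Fintype.card_pos_iff.mpr ⟨i⟩
  set m := ⌊t * N⌋₊
  have hsub : {f | conformalPValue (g ∘ f) i ≤ t} ⊆ {f | rankCount (g ∘ f) i < m} := fun f hf => by
    have : ((rankCount (g ∘ f) i + 1 : ℕ) : ℝ) ≤ t * N := by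
      push_cast
      linarith [(div_le_iff₀ hN).mp hf]
    exact Nat.lt_of_succ_le (Nat.le_floor this)
  have hm : (m : ℝ≥0∞) ≤ N * ENNReal.ofReal t := by
    rw [← ENNReal.ofReal_natCast, ← ENNReal.ofReal_natCast N, ← ENNReal.ofReal_mul hN.le,
      ENNReal.ofReal_le_ofReal_iff', mul_comm]
    rcases le_total 0 (t * N) with h | h
    · exact Or.inl (Nat.floor_le h)
    · exact Or.inr (by simp [m, Nat.floor_of_nonpos h])
  have hNne : (N : ℝ≥0∞) ≠ 0 := by exact_mod_cast hN.ne'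
  refine (ENNReal.mul_le_mul_iff_right hNne (ENNReal.natCast_ne_top N)).mp ?_
  exact (mul_le_mul_right (measure_mono hsub) _).trans
    ((card_mul_measure_pi_rankCount_lt_le ν hg m i).trans hm)

end Exchangeable

section Sampling

variable {Ω ι β : Type*} [MeasurableSpace Ω] [Fintype ι] [MeasurableSpace β]
  {μ : Measure Ω} [IsProbabilityMeasure μ] {Z : ι → Ω → β}

lemma map_fun_eq_pi_of_iIndepFun (hindep : iIndepFun Z μ) (i₀ : ι)
    (hident : ∀ i, IdentDistrib (Z i) (Z i₀) μ μ) :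
    μ.map (fun ω i => Z i ω) = Measure.pi fun _ : ι => μ.map (Z i₀) := by
  rw [(iIndepFun_iff_map_fun_eq_pi_map fun i => (hident i).aemeasurable_fst).mp hindep]
  exact congrArg Measure.pi (funext fun i => (hident i).map_eq)

lemma measure_conformalPValue_le_of_iid [DecidableEq ι] (hindep : iIndepFun Z μ) (i₀ : ι)
    (hident : ∀ i, IdentDistrib (Z i) (Z i₀) μ μ) {g : β → ℝ} (hg : Measurable g) (i : ι)
    (t : ℝ) :
    μ {ω | conformalPValue (fun j => g (Z j ω)) i ≤ t} ≤ ENNReal.ofReal t := by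
  have hW : AEMeasurable (fun ω i => Z i ω) μ :=
    aemeasurable_pi_lambda _ fun i => (hident i).aemeasurable_fst
  have hS : MeasurableSet {f : ι → β | conformalPValue (g ∘ f) i ≤ t} :=
    measurableSet_le ((measurable_from_nat (f := fun r : ℕ => (1 + r : ℝ) / Fintype.card ι)).comp
      (measurable_rankCount_comp hg i)) measurable_const
  have := Measure.isProbabilityMeasure_map (μ := μ) (hident i₀).aemeasurable_fst
  calc μ {ω | conformalPValue (fun j => g (Z j ω)) i ≤ t}
      = μ.map (fun ω i => Z i ω) {f | conformalPValue (g ∘ f) i ≤ t} :=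
        (Measure.map_apply_of_aemeasurable hW hS).symm
    _ ≤ ENNReal.ofReal t := by
        rw [map_fun_eq_pi_of_iIndepFun hindep i₀ hident]
        exact measure_pi_conformalPValue_le _ hg i t

end Sampling

lemma measure_card_mul_iInf_le_le {Ω ι : Type*} [MeasurableSpace Ω] [Fintype ι] [Nonempty ι]
    {μ : Measure Ω} {p : ι → Ω → ℝ} (hp : ∀ k t, μ {ω | p k ω ≤ t} ≤ ENNReal.ofReal t)
    (α : ℝ) :
    μ {ω | Fintype.card ι * ⨅ k, p k ω ≤ α} ≤ ENNReal.ofReal α := by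
  set N := Fintype.card ι
  have hN : (0 : ℝ) < N := by exact_mod_cast Fintype.card_pos
  have hsub : {ω | N * ⨅ k, p k ω ≤ α} ⊆ ⋃ k, {ω | p k ω ≤ α / N} := fun ω hω => by
    obtain ⟨k, hk⟩ := exists_eq_ciInf_of_finite (f := fun k => p k ω)
    exact Set.mem_iUnion.mpr ⟨k, (le_div_iff₀' hN).mpr (hk ▸ hω)⟩
  calc μ {ω | N * ⨅ k, p k ω ≤ α}
      ≤ ∑ k, μ {ω | p k ω ≤ α / N} := (measure_mono hsub).trans (measure_iUnion_fintype_le _ _)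
    _ ≤ ∑ _k : ι, ENNReal.ofReal (α / N) := sum_le_sum fun k _ => hp k _
    _ = ENNReal.ofReal α := by
        rw [sum_const, card_univ, nsmul_eq_mul, ← ENNReal.ofReal_natCast,
          ← ENNReal.ofReal_mul hN.le, mul_div_cancel₀ _ hN.ne']

theorem ensemble_spikecp_pm_coverage_general
    {Ω E : Type*} [MeasurableSpace Ω] [MeasurableSpace E]
    (μ : Measure Ω) [IsProbabilityMeasure μ]
    (n C : ℕ)
    (Z : Fin (n + 1) → Ω → E × Fin C)
    (hindep : iIndepFun Z μ)
    (hident : ∀ i, IdentDistrib (Z i) (Z 0) μ μ)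
    (K : ℕ) (hK : 0 < K)
    (s : Fin K → E × Fin C → ℝ) (hs : ∀ k, Measurable (s k))
    (α : ℝ) (hα : α ∈ Set.Ioo (0 : ℝ) 1) :
    ENNReal.ofReal (1 - α) ≤
      μ {ω | (Z 0 ω).2 ∈ {c : Fin C |
        α < (K : ℝ) * ⨅ k : Fin K,
          (1 + ((Finset.univ.filter
              fun i : Fin (n + 1) => i ≠ 0 ∧ s k ((Z 0 ω).1, c) ≤ s k (Z i ω)).card : ℝ))
            / ((n : ℝ) + 1)}} := by
  have : Nonempty (Fin K) := ⟨⟨0, hK⟩⟩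
  set p : Fin K → Ω → ℝ := fun k ω => conformalPValue (fun j => s k (Z j ω)) 0
  set miscover := {ω | Fintype.card (Fin K) * ⨅ k, p k ω ≤ α}
  have hmiscover : μ miscover ≤ ENNReal.ofReal α :=
    measure_card_mul_iInf_le_le
      (fun k => measure_conformalPValue_le_of_iid hindep 0 hident (hs k) 0) α
  calc ENNReal.ofReal (1 - α) = 1 - ENNReal.ofReal α := by
        rw [ENNReal.ofReal_sub _ hα.1.le, ENNReal.ofReal_one]
    _ ≤ 1 - μ miscover := tsub_le_tsub_left hmiscover 1
    _ ≤ μ miscoverᶜ :=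
        tsub_le_iff_left.mpr (by simpa using measure_univ_le_add_compl (μ := μ) miscover)
    _ = _ := by
        congr 1
        ext ω
        simp [miscover, p, conformalPValue, rankCount]

/-- Let `Z i = (X i, C i)`, `i = 0, ..., n`, be i.i.d. random pairs in
`E × 𝒞` with `𝒞 = Fin C`, and let `s 1, ..., s K : E × 𝒞 → ℝ` be measurable score
functions (one per ensemble model). For each model `k` and label `c` define the per-model
conformal p-value `p_c^k(X 0) = (1 + #{i ∈ {1,...,n} : s k (X 0, c) ≤ s k (X i, C i)})/(n+1)`,
the merged p-value `p_c(X 0) = K ⬝ min_k p_c^k(X 0)`, and for `α ∈ (0,1)` the set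
`Γ(X 0) = {c : p_c(X 0) > α}`. Then `Pr(C 0 ∈ Γ(X 0)) ≥ 1 − α`. -/
theorem ensemble_spikecp_pm_coverage
    {Ω E : Type*} [MeasurableSpace Ω] [MeasurableSpace E]
    (μ : Measure Ω) [IsProbabilityMeasure μ]
    (n C : ℕ) (hC : 0 < C)
    (Z : Fin (n + 1) → Ω → E × Fin C)
    (hmeas : ∀ i, Measurable (Z i))
    (hindep : iIndepFun Z μ)
    (hident : ∀ i, IdentDistrib (Z i) (Z 0) μ μ)
    (K : ℕ) (hK : 0 < K)
    (s : Fin K → E × Fin C → ℝ) (hs : ∀ k, Measurable (s k))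
    (α : ℝ) (hα : α ∈ Set.Ioo (0 : ℝ) 1) :
    ENNReal.ofReal (1 - α) ≤
      μ {ω | (Z 0 ω).2 ∈ {c : Fin C |
        α < (K : ℝ) * ⨅ k : Fin K,
          (1 + ((Finset.univ.filter
              fun i : Fin (n + 1) => i ≠ 0 ∧ s k ((Z 0 ω).1, c) ≤ s k (Z i ω)).card : ℝ))
            / ((n : ℝ) + 1)}} :=
  ensemble_spikecp_pm_coverage_general μ n C Z hindep hident K hK s hs α hα
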